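/- arXiv:2602.20016 — 3 statements merged into one kernel-verified Lean document; each statement's English description precedes it below -/
import Mathlib

section
/- Let Ω ⊂ ℝ³ be a bounded open set with boundary of Hölder class C^{0,β} for every β ∈ (0,1). Let 1 < p < ∞ and 1 ≤ r < p. Then there is a constant C = C(Ω,p,r) such that for all smooth vector fields q : Ω → ℝ³, ‖∇q‖_{L^r(Ω)} ≤ C(‖𝔻q‖_{L^p(Ω)} + ‖q‖_{L^p(Ω)}), where 𝔻q = (∇q + (∇q)ᵀ)/2 is the symmetric gradient. -/
open MeasureTheory Metric

/-- The Frobenius norm of the symmetric gradient `𝔻q = (∇q + (∇q)ᵀ)/2`. -/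
noncomputable def symGradNorm (q : (Fin 3 → ℝ) → Fin 3 → ℝ) (x : Fin 3 → ℝ) : ℝ :=
  Real.sqrt (∑ i : Fin 3, ∑ j : Fin 3,
    ((fderiv ℝ q x (Pi.single j 1) i + fderiv ℝ q x (Pi.single i 1) j) / 2) ^ 2)

/-- Korn's inequality in Hölder domains: assuming the weighted Korn inequality of
Acosta–Durán (for every `β ∈ (0,1)`) and the integrability of negative powers of the
boundary distance, for `1 < p < ∞` and `1 ≤ r < p` there is `C = C(Ω,p,r)` with
`‖∇q‖_{L^r(Ω)} ≤ C(‖𝔻q‖_{L^p(Ω)} + ‖q‖_{L^p(Ω)})` for all smooth `q`. -/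
theorem korn_holder_domain
    (Ω : Set (Fin 3 → ℝ)) (hΩo : IsOpen Ω) (hΩb : Bornology.IsBounded Ω)
    (p r : ℝ) (hp : 1 < p) (hr : 1 ≤ r) (hrp : r < p)
    (hKorn : ∀ β ∈ Set.Ioo (0:ℝ) 1, ∃ C₁ > 0, ∀ q : (Fin 3 → ℝ) → Fin 3 → ℝ,
      ContDiff ℝ (⊤ : ℕ∞) q →
      eLpNorm (fun x => infDist x (frontier Ω) ^ (1 - β) * ‖fderiv ℝ q x‖)
          (ENNReal.ofReal p) (volume.restrict Ω)
        ≤ ENNReal.ofReal C₁ *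
          (eLpNorm (symGradNorm q) (ENNReal.ofReal p) (volume.restrict Ω)
            + eLpNorm q (ENNReal.ofReal p) (volume.restrict Ω)))
    (hInt : ∀ β ∈ Set.Ioo (0:ℝ) 1, ∀ s : ℝ, 1 ≤ s → s < 1 / (1 - β) →
      ∫⁻ x in Ω, ENNReal.ofReal (infDist x (frontier Ω) ^ ((β - 1) * s)) < ⊤) :
    ∃ C > 0, ∀ q : (Fin 3 → ℝ) → Fin 3 → ℝ, ContDiff ℝ (⊤ : ℕ∞) q →
      eLpNorm (fun x => ‖fderiv ℝ q x‖) (ENNReal.ofReal r) (volume.restrict Ω)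
        ≤ ENNReal.ofReal C *
          (eLpNorm (symGradNorm q) (ENNReal.ofReal p) (volume.restrict Ω)
            + eLpNorm q (ENNReal.ofReal p) (volume.restrict Ω)) := by
  -- dispose of the trivial case `Ω = ∅`
  rcases Set.eq_empty_or_nonempty Ω with hΩe | hΩne
  · exact ⟨1, one_pos, fun q hq => by simp [hΩe]⟩
  -- the frontier of a nonempty bounded open set is nonempty
  have hfr : (frontier Ω).Nonempty := by
    rcases Set.eq_empty_or_nonempty (frontier Ω) with h | h
    · exfalso
      have hclopen : IsClopen Ω := isClopen_iff_frontier_eq_empty.mpr h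
      rcases isClopen_iff.mp hclopen with h1 | h1
      · exact hΩne.ne_empty h1
      · exact NormedSpace.unbounded_univ ℝ (Fin 3 → ℝ) (h1 ▸ hΩb)
    · exact h
  set d : (Fin 3 → ℝ) → ℝ := fun x => infDist x (frontier Ω) with hd_def
  have hd_nonneg : ∀ x, 0 ≤ d x := fun x => infDist_nonneg
  have hd_pos : ∀ x ∈ Ω, 0 < d x := by
    intro x hx
    have hxf : x ∉ frontier Ω := fun hmem => hmem.2 (by rwa [hΩo.interior_eq])
    exact (isClosed_frontier.notMem_iff_infDist_pos hfr).mp hxf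
  -- exponents
  have hr0 : (0:ℝ) < r := by linarith
  have hp0 : (0:ℝ) < p := by linarith
  have hpr : (0:ℝ) < p - r := by linarith
  set s : ℝ := p * r / (p - r) with hs_def
  have hs_pos : 0 < s := by positivity
  have hs_inv : 1 / s = 1 / r - 1 / p := by
    rw [hs_def, one_div_div, div_sub_div _ _ (ne_of_gt hr0) (ne_of_gt hp0)]
    congr 1
    · ring
    · ring
  have hs1 : 1 ≤ s := by
    have h1 : 1 / s ≤ 1 := by
      have h2 : 1 / r ≤ 1 := by
        rw [div_le_one hr0]; exact hr
      have h3 : 0 < 1 / p := by positivity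
      rw [hs_inv]; linarith
    have := (div_le_one hs_pos).mp h1
    linarith
  set β : ℝ := 1 - 1 / (2 * s) with hβ_def
  have h2s : (0:ℝ) < 2 * s := by linarith
  have hβ : β ∈ Set.Ioo (0:ℝ) 1 := by
    constructor
    · have : 1 / (2 * s) ≤ 1 / 2 := by
        apply one_div_le_one_div_of_le two_pos
        linarith
      rw [hβ_def]; linarith
    · have : 0 < 1 / (2 * s) := by positivity
      rw [hβ_def]; linarith
  have h1β : 1 - β = 1 / (2 * s) := by rw [hβ_def]; ring
  have hsβ : s < 1 / (1 - β) := by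
    rw [h1β, one_div_one_div]; linarith
  obtain ⟨C₁, hC₁pos, hKq⟩ := hKorn β hβ
  have hI := hInt β hβ s hs1 hsβ
  -- the weight function
  set w : (Fin 3 → ℝ) → ℝ := fun x => d x ^ (β - 1) with hw_def
  have hcont1 : Continuous fun x => d x ^ (1 - β) :=
    (continuous_infDist_pt _).rpow_const fun x => Or.inr (by linarith [hβ.2])
  have hw_eq : w = fun x => (d x ^ (1 - β))⁻¹ := by
    funext x
    show d x ^ (β - 1) = (d x ^ (1 - β))⁻¹
    rw [show β - 1 = -(1 - β) by ring, Real.rpow_neg (hd_nonneg x)]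
  have hw_meas : Measurable w := by
    rw [hw_eq]; exact hcont1.measurable.inv
  -- finiteness of the `L^s` norm of the weight
  have hs_ne : ENNReal.ofReal s ≠ 0 := by
    simp only [ne_eq, ENNReal.ofReal_eq_zero, not_le]; exact hs_pos
  have hw_lp : eLpNorm w (ENNReal.ofReal s) (volume.restrict Ω) < ⊤ := by
    rw [eLpNorm_eq_lintegral_rpow_enorm_toReal hs_ne ENNReal.ofReal_ne_top,
      ENNReal.toReal_ofReal hs_pos.le]
    apply ENNReal.rpow_lt_top_of_nonneg (by positivity)
    have hpt : ∀ x, (‖w x‖ₑ) ^ s = ENNReal.ofReal (d x ^ ((β - 1) * s)) := by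
      intro x
      have hwx : 0 ≤ w x := Real.rpow_nonneg (hd_nonneg x) _
      rw [Real.enorm_eq_ofReal hwx, ENNReal.ofReal_rpow_of_nonneg hwx hs_pos.le]
      congr 1
      show (d x ^ (β - 1)) ^ s = d x ^ ((β - 1) * s)
      exact (Real.rpow_mul (hd_nonneg x) _ _).symm
    simp only [hpt]
    exact hI.ne
  set M := eLpNorm w (ENNReal.ofReal s) (volume.restrict Ω) with hM_def
  refine ⟨C₁ * (M.toReal + 1), by positivity, fun q hq => ?_⟩
  -- a.e. pointwise factorization on Ω
  have hae : (fun x => ‖fderiv ℝ q x‖)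
      =ᵐ[volume.restrict Ω] fun x => w x * (d x ^ (1 - β) * ‖fderiv ℝ q x‖) := by
    filter_upwards [ae_restrict_mem hΩo.measurableSet] with x hx
    have hdx := hd_pos x hx
    rw [hw_def, ← mul_assoc, ← Real.rpow_add hdx,
      show β - 1 + (1 - β) = 0 by ring, Real.rpow_zero, one_mul]
  -- measurability of the weighted gradient
  have hg_meas : AEStronglyMeasurable (fun x => d x ^ (1 - β) * ‖fderiv ℝ q x‖)
      (volume.restrict Ω) :=
    (hcont1.mul (hq.continuous_fderiv (by simp)).norm).aestronglyMeasurable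
  -- exponent relation in `ℝ≥0∞`
  have hreal : (1:ℝ) / r = 1 / s + 1 / p := by rw [hs_inv]; ring
  have hexp : 1 / ENNReal.ofReal r = 1 / ENNReal.ofReal s + 1 / ENNReal.ofReal p := by
    rw [one_div, one_div, one_div, ← ENNReal.ofReal_inv_of_pos hr0,
      ← ENNReal.ofReal_inv_of_pos hs_pos, ← ENNReal.ofReal_inv_of_pos hp0,
      ← ENNReal.ofReal_add (by positivity) (by positivity)]
    congr 1
    simpa only [one_div] using hreal
  set T := eLpNorm (symGradNorm q) (ENNReal.ofReal p) (volume.restrict Ω)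
    + eLpNorm q (ENNReal.ofReal p) (volume.restrict Ω) with hT_def
  have hM' : M ≤ ENNReal.ofReal (M.toReal + 1) := by
    calc M = ENNReal.ofReal M.toReal := (ENNReal.ofReal_toReal hw_lp.ne).symm
    _ ≤ ENNReal.ofReal (M.toReal + 1) := ENNReal.ofReal_le_ofReal (by linarith)
  calc eLpNorm (fun x => ‖fderiv ℝ q x‖) (ENNReal.ofReal r) (volume.restrict Ω)
      = eLpNorm (fun x => w x * (d x ^ (1 - β) * ‖fderiv ℝ q x‖)) (ENNReal.ofReal r)
        (volume.restrict Ω) := eLpNorm_congr_ae hae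
    _ ≤ M * eLpNorm (fun x => d x ^ (1 - β) * ‖fderiv ℝ q x‖) (ENNReal.ofReal p)
        (volume.restrict Ω) :=
        by
          haveI : ENNReal.HolderTriple (ENNReal.ofReal s) (ENNReal.ofReal p) (ENNReal.ofReal r) :=
            ⟨by simpa only [one_div] using hexp.symm⟩
          have := eLpNorm_le_eLpNorm_mul_eLpNorm'_of_norm hw_meas.aestronglyMeasurable hg_meas
            (· * ·) 1 (Filter.Eventually.of_forall fun x => by simp [norm_mul])
            (p := ENNReal.ofReal s) (q := ENNReal.ofReal p) (r := ENNReal.ofReal r)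
          simpa using this
    _ ≤ M * (ENNReal.ofReal C₁ * T) := mul_le_mul_right (hKq q hq) M
    _ = M * ENNReal.ofReal C₁ * T := (mul_assoc _ _ _).symm
    _ ≤ ENNReal.ofReal (M.toReal + 1) * ENNReal.ofReal C₁ * T :=
        mul_le_mul_left (mul_le_mul_left hM' _) _
    _ = ENNReal.ofReal (C₁ * (M.toReal + 1)) * T := by
        rw [ENNReal.ofReal_mul hC₁pos.le, mul_comm (ENNReal.ofReal C₁)]
end

section
/- Let δ : ω → ℝ be smooth with ‖δ‖_∞ ≤ M < R, ξ ∈ C_c^∞(ω), and α₁ a smooth cutoff on (0, R+M) with α₁ = 1 on [R−M, R+M] and α₁ = 0 on [0,(R−M)/2]. Define in cylindrical coordinates the vector field F_δ(ξ) := ((R+δ)/r) α₁(r) ξ e_r + (−α₁'(r)) (∫₀^θ (R+δ)ξ dθ̃) e_θ on the domain Ω^δ = {0 < r < R+δ(θ,z)}. Then div F_δ(ξ) = 0 on Ω^δ, F_δ(ξ) = ξ e_r on the deformed boundary r = R+δ, and F_δ(ξ) = 0 on the planes z ∈ {0,L}. -/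
open Real MeasureTheory

/-- Radial component of the no-slip extension operator `F_δ(ξ)`. -/
noncomputable def Fr (R : ℝ) (δ ξ : ℝ × ℝ → ℝ) (α₁ : ℝ → ℝ) (r : ℝ) (p : ℝ × ℝ) : ℝ :=
  ((R + δ p) / r) * α₁ r * ξ p

/-- Angular component of the no-slip extension operator `F_δ(ξ)`. -/
noncomputable def Fθ (R : ℝ) (δ ξ : ℝ × ℝ → ℝ) (α₁' : ℝ → ℝ) (r : ℝ) (p : ℝ × ℝ) : ℝ :=
  -α₁' r * ∫ s in (0:ℝ)..p.1, (R + δ (s, p.2)) * ξ (s, p.2)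

/-- The extension `F_δ(ξ) = ((R+δ)/r) α₁(r) ξ e_r − α₁'(r) (∫₀^θ (R+δ)ξ) e_θ` is
divergence free in cylindrical coordinates on `Ω^δ`, equals `ξ e_r` on the deformed
boundary `r = R+δ`, and vanishes on the planes `z ∈ {0, L}`. -/
theorem extension_no_slip_properties
    (R L M : ℝ) (hR : 0 < R) (hL : 0 < L) (hM : 0 < M) (hMR : M < R)
    (δ ξ : ℝ × ℝ → ℝ) (hδ : ContDiff ℝ (⊤ : ℕ∞) δ) (hξ : ContDiff ℝ (⊤ : ℕ∞) ξ)
    (hδM : ∀ p, |δ p| ≤ M)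
    (hξ0 : ∀ p : ℝ × ℝ, p ∉ Set.Ioo (0:ℝ) (2 * π) ×ˢ Set.Ioo (0:ℝ) L → ξ p = 0)
    (α₁ α₁' : ℝ → ℝ)
    (hα₁d : ∀ r, HasDerivAt α₁ (α₁' r) r)
    (hα₁one : ∀ r ∈ Set.Icc (R - M) (R + M), α₁ r = 1)
    (hα₁zero : ∀ r ∈ Set.Icc (0:ℝ) ((R - M) / 2), α₁ r = 0) :
    (∀ p ∈ Set.Ioo (0:ℝ) (2 * π) ×ˢ Set.Ioo (0:ℝ) L, ∀ r ∈ Set.Ioo (0:ℝ) (R + δ p),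
      (1 / r) * deriv (fun r' => r' * Fr R δ ξ α₁ r' p) r
        + (1 / r) * deriv (fun θ => Fθ R δ ξ α₁' r (θ, p.2)) p.1 = 0) ∧
    (∀ p ∈ Set.Ioo (0:ℝ) (2 * π) ×ˢ Set.Ioo (0:ℝ) L,
      Fr R δ ξ α₁ (R + δ p) p = ξ p ∧ Fθ R δ ξ α₁' (R + δ p) p = 0) ∧
    (∀ θ r : ℝ,
      Fr R δ ξ α₁ r (θ, 0) = 0 ∧ Fθ R δ ξ α₁' r (θ, 0) = 0 ∧
      Fr R δ ξ α₁ r (θ, L) = 0 ∧ Fθ R δ ξ α₁' r (θ, L) = 0) := by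
  -- α₁' vanishes on [R-M, R+M] since α₁ is constant there.
  have hIcc : (R - M) < (R + M) := by linarith
  have hα₁'zero : ∀ r ∈ Set.Icc (R - M) (R + M), α₁' r = 0 := by
    intro r hr
    have hu : UniqueDiffWithinAt ℝ (Set.Icc (R - M) (R + M)) r :=
      (uniqueDiffOn_Icc hIcc) r hr
    have h1 : HasDerivWithinAt α₁ (α₁' r) (Set.Icc (R - M) (R + M)) r :=
      (hα₁d r).hasDerivWithinAt
    have h2 : HasDerivWithinAt α₁ 0 (Set.Icc (R - M) (R + M)) r := by
      have hc : HasDerivWithinAt (fun _ : ℝ => (1 : ℝ)) 0 (Set.Icc (R - M) (R + M)) r :=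
        (hasDerivWithinAt_const _ _ _)
      exact hc.congr (fun x hx => (hα₁one x hx)) (hα₁one r hr)
    calc α₁' r = derivWithin α₁ (Set.Icc (R - M) (R + M)) r := (h1.derivWithin hu).symm
      _ = 0 := h2.derivWithin hu
  -- The integrand for Fθ is continuous.
  have hcont : ∀ z : ℝ, Continuous (fun s : ℝ => (R + δ (s, z)) * ξ (s, z)) := by
    intro z
    have h1 : Continuous (fun s : ℝ => (s, z)) := continuous_id.prodMk continuous_const
    exact (continuous_const.add (hδ.continuous.comp h1)).mul (hξ.continuous.comp h1)
  refine ⟨?_, ?_, ?_⟩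
  · -- divergence free
    intro p hp r hr
    obtain ⟨hr0, hrδ⟩ := hr
    -- radial derivative
    have hg : (fun r' => r' * Fr R δ ξ α₁ r' p) = fun r' => ((R + δ p) * ξ p) * α₁ r' := by
      funext r'
      by_cases h : r' = 0
      · subst h
        have hz : α₁ 0 = 0 := hα₁zero 0 ⟨le_refl _, by linarith⟩
        simp [Fr, hz]
      · simp only [Fr]
        field_simp
    have hd1 : deriv (fun r' => r' * Fr R δ ξ α₁ r' p) r = ((R + δ p) * ξ p) * α₁' r := by
      rw [hg]
      exact ((hα₁d r).const_mul ((R + δ p) * ξ p)).deriv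
    -- angular derivative
    have hI : HasDerivAt (fun θ => ∫ s in (0:ℝ)..θ, (R + δ (s, p.2)) * ξ (s, p.2))
        ((R + δ (p.1, p.2)) * ξ (p.1, p.2)) p.1 := by
      have := (hcont p.2).deriv_integral
      exact intervalIntegral.integral_hasDerivAt_right
        ((hcont p.2).intervalIntegrable 0 p.1)
        ((hcont p.2).stronglyMeasurableAtFilter _ _) (hcont p.2).continuousAt
    have hd2 : deriv (fun θ => Fθ R δ ξ α₁' r (θ, p.2)) p.1
        = -α₁' r * ((R + δ p) * ξ p) := by
      have := (hI.const_mul (-α₁' r)).deriv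
      simpa [Fθ] using this
    rw [hd1, hd2]
    ring
  · -- deformed boundary
    intro p hp
    have habs := abs_le.mp (hδM p)
    have hmem : (R + δ p) ∈ Set.Icc (R - M) (R + M) := ⟨by linarith [habs.1], by linarith [habs.2]⟩
    constructor
    · have hpos : (R + δ p) ≠ 0 := ne_of_gt (by linarith [habs.1])
      simp [Fr, hα₁one _ hmem, div_self hpos]
    · simp [Fθ, hα₁'zero _ hmem]
  · -- planes z = 0 and z = L
    intro θ r
    have h0 : ∀ s : ℝ, ξ (s, (0:ℝ)) = 0 := fun s =>
      hξ0 _ (by simp [Set.mem_prod])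
    have hL' : ∀ s : ℝ, ξ (s, L) = 0 := fun s =>
      hξ0 _ (by simp [Set.mem_prod])
    refine ⟨by simp [Fr, h0], by simp [Fθ, h0], by simp [Fr, hL'], by simp [Fθ, hL']⟩
end

section
/- Let η̃(r,θ,z) = ρ(r)η(θ,z) be a radial extension of η ∈ C²(ω) with ‖η‖_∞ ≤ M < R, and for ξ ∈ C_c^∞(ω) define, in cylindrical coordinates on the reference cylinder Ω, the field q(ξ) := (r+η̃) ξ e_r + β e_θ where β(r,θ,z) = −∂_r ∫₀^θ r(r+η̃(r,s,z)) ξ(s,z) ds. Then div q(ξ) = 0 in Ω. -/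
open Real MeasureTheory

/-- The angular component `β = −∂_r ∫₀^θ r(r+η̃)ξ ds` of the slip-adapted field `q(ξ)`. -/
noncomputable def betaQ (ρ : ℝ → ℝ) (η ξ : ℝ × ℝ → ℝ) (r : ℝ) (p : ℝ × ℝ) : ℝ :=
  -deriv (fun r' => ∫ s in (0:ℝ)..p.1, r' * (r' + ρ r' * η (s, p.2)) * ξ (s, p.2)) r

/-- The field `q(ξ) = (r+η̃)ξ e_r + β e_θ`, with
`β = −∂_r ∫₀^θ r(r+η̃(r,s,z))ξ(s,z) ds`, is divergence free in cylindrical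
coordinates on the reference cylinder. -/
theorem q_divergence_free
    (R L M : ℝ) (hR : 0 < R) (hL : 0 < L) (hM : 0 < M) (hMR : M < R)
    (ρ : ℝ → ℝ) (hρ : ContDiff ℝ (⊤ : ℕ∞) ρ)
    (η ξ : ℝ × ℝ → ℝ) (hη : ContDiff ℝ 2 η) (hξ : ContDiff ℝ (⊤ : ℕ∞) ξ)
    (hηM : ∀ p, |η p| ≤ M)
    (hξ0 : ∀ p : ℝ × ℝ, p ∉ Set.Ioo (0:ℝ) (2 * π) ×ˢ Set.Ioo (0:ℝ) L → ξ p = 0) :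
    ∀ p : ℝ × ℝ, ∀ r ∈ Set.Ioo (0:ℝ) R,
      (1 / r) * deriv (fun r' => r' * ((r' + ρ r' * η p) * ξ p)) r
        + (1 / r) * deriv (fun θ => betaQ ρ η ξ r (θ, p.2)) p.1 = 0 := by
  intro p r hr
  obtain ⟨θ, z⟩ := p
  have hr0 : r ≠ 0 := ne_of_gt hr.1
  have hρd : ∀ x, HasDerivAt ρ (deriv ρ x) x := fun x =>
    ((hρ.differentiable (by simp)) x).hasDerivAt
  -- continuity of slices
  have hξc : Continuous fun s => ξ (s, z) :=
    (hξ.continuous).comp (continuous_id.prodMk continuous_const)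
  have hηξc : Continuous fun s => η (s, z) * ξ (s, z) :=
    (((hη.continuous).comp (continuous_id.prodMk continuous_const))).mul hξc
  set A : ℝ → ℝ := fun t => ∫ s in (0:ℝ)..t, ξ (s, z) with hA
  set B : ℝ → ℝ := fun t => ∫ s in (0:ℝ)..t, η (s, z) * ξ (s, z) with hB
  set C : ℝ := ρ r + r * deriv ρ r with hC
  -- Step 1: the inner integral splits
  have hsplit : ∀ r' t : ℝ,
      (∫ s in (0:ℝ)..t, r' * (r' + ρ r' * η (s, z)) * ξ (s, z))
        = r' ^ 2 * A t + r' * ρ r' * B t := by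
    intro r' t
    have : (fun s => r' * (r' + ρ r' * η (s, z)) * ξ (s, z))
        = fun s => r' ^ 2 * ξ (s, z) + (r' * ρ r') * (η (s, z) * ξ (s, z)) := by
      funext s; ring
    rw [this, intervalIntegral.integral_add (f := fun s => r' ^ 2 * ξ (s, z))
      (g := fun s => (r' * ρ r') * (η (s, z) * ξ (s, z)))
      ((continuous_const.mul hξc).intervalIntegrable _ _)
      ((continuous_const.mul hηξc).intervalIntegrable _ _),
      intervalIntegral.integral_const_mul, intervalIntegral.integral_const_mul]
  -- Step 2: compute betaQ explicitly
  have hbeta : ∀ t : ℝ, betaQ ρ η ξ r (t, z) = -(2 * r * A t + C * B t) := by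
    intro t
    have h1 : HasDerivAt (fun r' => r' ^ 2 * A t + r' * ρ r' * B t)
        (2 * r * A t + C * B t) r := by
      have hp : HasDerivAt (fun r' : ℝ => r' ^ 2) (2 * r) r := by
        simpa using hasDerivAt_pow 2 r
      have hq : HasDerivAt (fun r' => r' * ρ r') (1 * ρ r + r * deriv ρ r) r :=
        (hasDerivAt_id r).mul (hρd r)
      refine ((hp.mul_const (A t)).add (hq.mul_const (B t))).congr_deriv ?_
      rw [hC, one_mul]
    unfold betaQ
    simp only
    have : (fun r' => ∫ s in (0:ℝ)..t, r' * (r' + ρ r' * η (s, z)) * ξ (s, z))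
        = fun r' => r' ^ 2 * A t + r' * ρ r' * B t := funext fun r' => hsplit r' t
    rw [this, h1.deriv]
  -- Step 3: derivative in θ of betaQ
  have hAd : HasDerivAt A (ξ (θ, z)) θ :=
    intervalIntegral.integral_hasDerivAt_right (hξc.intervalIntegrable _ _)
      hξc.aestronglyMeasurable.stronglyMeasurableAtFilter hξc.continuousAt
  have hBd : HasDerivAt B (η (θ, z) * ξ (θ, z)) θ :=
    intervalIntegral.integral_hasDerivAt_right (hηξc.intervalIntegrable _ _)
      hηξc.aestronglyMeasurable.stronglyMeasurableAtFilter hηξc.continuousAt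
  have hbd : HasDerivAt (fun t => betaQ ρ η ξ r (t, z))
      (-(2 * r * ξ (θ, z) + C * (η (θ, z) * ξ (θ, z)))) θ := by
    have : HasDerivAt (fun t => -(2 * r * A t + C * B t))
        (-(2 * r * ξ (θ, z) + C * (η (θ, z) * ξ (θ, z)))) θ :=
      ((hAd.const_mul (2 * r)).add (hBd.const_mul C)).neg
    exact this.congr_of_eventuallyEq (Filter.Eventually.of_forall hbeta)
  -- Step 4: radial derivative
  have hrd : deriv (fun r' => r' * ((r' + ρ r' * η (θ, z)) * ξ (θ, z))) r
      = 2 * r * ξ (θ, z) + C * (η (θ, z) * ξ (θ, z)) := by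
    have h1 : HasDerivAt (fun r' => r' * ((r' + ρ r' * η (θ, z)) * ξ (θ, z)))
        ((1 : ℝ) * ((r + ρ r * η (θ, z)) * ξ (θ, z))
          + r * ((1 + deriv ρ r * η (θ, z)) * ξ (θ, z))) r := by
      exact (hasDerivAt_id r).mul
        (((hasDerivAt_id r).add ((hρd r).mul_const _)).mul_const _)
    rw [h1.deriv, hC]; ring
  rw [hrd, hbd.deriv]
  field_simp
  ring
end
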